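/- For the β-deformed second-order operator 𝒲^2_n = ∑_i (∂²/∂z_i²)∘z_i^{n+2} - 2β ∑_i ∑_{j≠i} (∂/∂z_i)∘(z_i^{n+2}/(z_i - z_j)), applied to Δ^{2β} e^{V} with V = ∑_i V(z_i), one has the Ward-identity integrand formula: 𝒲^2_n(Δ^{2β} e^V) = [∑_i (z_i^{n+2} V'(z_i)² + z_i^{n+2} V''(z_i) + 2(n+2) z_i^{n+1} V'(z_i) + (n+2)(n+1) z_i^n) + 2β ∑_{i≠j} (z_i^{n+2} V'(z_i) + (n+2) z_i^{n+1})/(z_i - z_j)] Δ^{2β} e^V, on the domain where z_1 > ... > z_N. -/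

import Mathlib

/-- Partial derivative of `f : (Fin N → ℝ) → ℝ` in the `i`-th coordinate at `z`. -/
noncomputable def pd {N : ℕ} (i : Fin N) (f : (Fin N → ℝ) → ℝ) (z : Fin N → ℝ) : ℝ :=
  deriv (fun t => f (Function.update z i t)) (z i)

/-- The Vandermonde product Δ(z) = ∏_{i<j} (z_i - z_j). -/
noncomputable def vand {N : ℕ} (z : Fin N → ℝ) : ℝ :=
  ∏ i : Fin N, ∏ j ∈ Finset.univ.filter (fun j => i < j), (z i - z j)

/-- The integrand `Δ(z)^{2β} e^{∑_i V(z_i)}` of the β-deformed matrix model. -/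
noncomputable def integrand {N : ℕ} (β : ℝ) (V : ℝ → ℝ) (z : Fin N → ℝ) : ℝ :=
  (vand z) ^ (2 * β) * Real.exp (∑ i : Fin N, V (z i))

section Aux

lemma pd_pd {N : ℕ} (i : Fin N) (f : (Fin N → ℝ) → ℝ) (z : Fin N → ℝ) :
    pd i (pd i f) z = deriv (deriv (fun t => f (Function.update z i t))) (z i) := by
  unfold pd
  congr 1
  funext t
  simp [Function.update_idem]

noncomputable def qfn {N : ℕ} (z : Fin N → ℝ) (i : Fin N) (t : ℝ) : ℝ :=
  ∏ j ∈ Finset.univ.filter (fun j => j ≠ i), (if i < j then t - z j else z j - t)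

noncomputable def Cc {N : ℕ} (z : Fin N → ℝ) (i : Fin N) : ℝ :=
  ∏ a ∈ Finset.univ.filter (fun a => a ≠ i),
    ∏ b ∈ Finset.univ.filter (fun b => a < b ∧ b ≠ i), (z a - z b)

noncomputable def Ssum {N : ℕ} (z : Fin N → ℝ) (i : Fin N) (t : ℝ) : ℝ :=
  ∑ j ∈ Finset.univ.filter (fun j => j ≠ i), (t - z j)⁻¹

noncomputable def Tsum {N : ℕ} (z : Fin N → ℝ) (i : Fin N) (t : ℝ) : ℝ :=
  ∑ j ∈ Finset.univ.filter (fun j => j ≠ i), ((t - z j)⁻¹) ^ 2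

lemma vand_upd {N : ℕ} (z : Fin N → ℝ) (i : Fin N) (t : ℝ) :
    vand (Function.update z i t) = qfn z i t * Cc z i := by
  classical
  rw [vand, qfn, Cc]
  rw [← Finset.mul_prod_erase Finset.univ _ (Finset.mem_univ i)]
  have h1 : (∏ b ∈ Finset.univ.filter (fun b => i < b),
      (Function.update z i t i - Function.update z i t b)) =
      ∏ b ∈ Finset.univ.filter (fun b => i < b), (t - z b) := by
    apply Finset.prod_congr rfl
    intro b hb
    simp only [Finset.mem_filter] at hb
    rw [Function.update_self, Function.update_of_ne (ne_of_gt hb.2)]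
  rw [h1]
  have h2 : (∏ a ∈ Finset.univ.erase i, ∏ b ∈ Finset.univ.filter (fun b => a < b),
      (Function.update z i t a - Function.update z i t b)) =
      ∏ a ∈ Finset.univ.erase i, ((if a < i then z a - t else 1) *
        ∏ b ∈ Finset.univ.filter (fun b => a < b ∧ b ≠ i), (z a - z b)) := by
    apply Finset.prod_congr rfl
    intro a ha
    have hai : a ≠ i := Finset.ne_of_mem_erase ha
    rw [Function.update_of_ne hai]
    by_cases hcase : a < i
    · rw [if_pos hcase]
      have hmem : i ∈ Finset.univ.filter (fun b => a < b) := by simp [hcase]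
      rw [← Finset.mul_prod_erase _ _ hmem, Function.update_self]
      congr 1
      have hset : (Finset.univ.filter (fun b => a < b)).erase i =
          Finset.univ.filter (fun b => a < b ∧ b ≠ i) := by
        ext b; simp [and_comm]
      rw [hset]
      apply Finset.prod_congr rfl
      intro b hb
      simp only [Finset.mem_filter] at hb
      rw [Function.update_of_ne hb.2.2]
    · rw [if_neg hcase, one_mul]
      have hset : (Finset.univ.filter (fun b => a < b)) =
          Finset.univ.filter (fun b => a < b ∧ b ≠ i) := by
        ext b
        simp only [Finset.mem_filter, Finset.mem_univ, true_and]
        constructor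
        · intro hab; exact ⟨hab, by rintro rfl; exact hcase hab⟩
        · exact fun h => h.1
      rw [hset]
      apply Finset.prod_congr rfl
      intro b hb
      simp only [Finset.mem_filter] at hb
      rw [Function.update_of_ne hb.2.2]
  rw [h2, Finset.prod_mul_distrib]
  rw [Finset.filter_ne']
  rw [Finset.prod_ite (f := fun j => t - z j) (g := fun j => z j - t)]
  have e1 : (Finset.univ.erase i).filter (fun j => i < j) =
      Finset.univ.filter (fun b => i < b) := by
    ext b; simp only [Finset.mem_filter, Finset.mem_erase, Finset.mem_univ, true_and]
    constructor
    · rintro ⟨_, h⟩; exact h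
    · intro h; exact ⟨⟨ne_of_gt h, trivial⟩, h⟩
  have e2 : (∏ a ∈ Finset.univ.erase i, if a < i then z a - t else 1) =
      ∏ j ∈ (Finset.univ.erase i).filter (fun j => ¬ i < j), (z j - t) := by
    rw [Finset.prod_filter]
    apply Finset.prod_congr rfl
    intro a ha
    have hai : a ≠ i := Finset.ne_of_mem_erase ha
    by_cases hcase : a < i
    · rw [if_pos hcase, if_pos (not_lt_of_gt hcase)]
    · rw [if_neg hcase, if_neg]
      simp only [not_not]
      exact lt_of_le_of_ne (not_lt.mp hcase) (Ne.symm hai)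
  rw [e1, e2]
  ring

lemma qfn_hasDerivAt {N : ℕ} (z : Fin N → ℝ) (i : Fin N) (t : ℝ)
    (h : ∀ j : Fin N, j ≠ i → t ≠ z j) :
    HasDerivAt (qfn z i) (qfn z i t * Ssum z i t) t := by
  classical
  have hf : ∀ j ∈ Finset.univ.filter (fun j => j ≠ i),
      HasDerivAt (fun s => if i < j then s - z j else z j - s)
        (if i < j then (1:ℝ) else -1) t := by
    intro j _
    by_cases hc : i < j
    · simpa [hc] using (hasDerivAt_id t).sub_const (z j)
    · simpa [hc] using (hasDerivAt_id t).const_sub (z j)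
  have H := HasDerivAt.fun_finsetProd hf
  have key : (∑ j ∈ Finset.univ.filter (fun j => j ≠ i),
      (∏ q ∈ (Finset.univ.filter (fun j => j ≠ i)).erase j,
        (if i < q then t - z q else z q - t)) • (if i < j then (1:ℝ) else -1)) =
      qfn z i t * Ssum z i t := by
    rw [Ssum, Finset.mul_sum]
    apply Finset.sum_congr rfl
    intro j hj
    simp only [Finset.mem_filter] at hj
    have hne : t - z j ≠ 0 := sub_ne_zero.mpr (h j hj.2)
    have hfj : (if i < j then t - z j else z j - t) ≠ 0 := by
      by_cases hc : i < j
      · simpa [hc] using hne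
      · simp only [hc, if_false]
        rw [← neg_sub]; exact neg_ne_zero.mpr hne
    have hmem : j ∈ Finset.univ.filter (fun j => j ≠ i) := by simp [hj.2]
    have hpe := Finset.prod_erase_mul (Finset.univ.filter (fun j => j ≠ i))
        (fun q => if i < q then t - z q else z q - t) hmem
    have hprod : (∏ q ∈ (Finset.univ.filter (fun j => j ≠ i)).erase j,
        (if i < q then t - z q else z q - t)) =
        qfn z i t * (if i < j then t - z j else z j - t)⁻¹ := by
      rw [eq_mul_inv_iff_mul_eq₀ hfj, qfn]
      exact hpe
    rw [hprod, smul_eq_mul]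
    by_cases hc : i < j
    · simp [hc]
    · simp only [hc, if_false]
      rw [← neg_sub t (z j), inv_neg]
      ring
  rw [key] at H
  exact H

lemma ord_ne {N : ℕ} {z : Fin N → ℝ} {i : Fin N} {t : ℝ}
    (ord : ∀ a b : Fin N, a < b → Function.update z i t b < Function.update z i t a) :
    ∀ j : Fin N, j ≠ i → t ≠ z j := by
  intro j hj
  rcases lt_or_gt_of_ne hj with hlt | hgt
  · have := ord j i hlt
    rw [Function.update_self, Function.update_of_ne hj] at this
    exact (ne_of_gt this).symm
  · have := ord i j hgt
    rw [Function.update_self, Function.update_of_ne hj] at this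
    exact (ne_of_gt this)

lemma qfn_pos {N : ℕ} {z : Fin N → ℝ} {i : Fin N} {t : ℝ}
    (ord : ∀ a b : Fin N, a < b → Function.update z i t b < Function.update z i t a) :
    0 < qfn z i t := by
  apply Finset.prod_pos
  intro j hj
  simp only [Finset.mem_filter] at hj
  by_cases hc : i < j
  · have := ord i j hc
    rw [Function.update_self, Function.update_of_ne hj.2] at this
    simpa [hc] using sub_pos.mpr this
  · have hji : j < i := lt_of_le_of_ne (not_lt.mp hc) hj.2
    have := ord j i hji
    rw [Function.update_self, Function.update_of_ne hj.2] at this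
    simpa [hc] using sub_pos.mpr this

lemma Cc_pos {N : ℕ} {z : Fin N → ℝ} {i : Fin N} {t : ℝ}
    (ord : ∀ a b : Fin N, a < b → Function.update z i t b < Function.update z i t a) :
    0 < Cc z i := by
  apply Finset.prod_pos
  intro a ha
  apply Finset.prod_pos
  intro b hb
  simp only [Finset.mem_filter] at ha hb
  have := ord a b hb.2.1
  rw [Function.update_of_ne ha.2, Function.update_of_ne hb.2.2] at this
  exact sub_pos.mpr this

lemma vand_upd_pos {N : ℕ} {z : Fin N → ℝ} {i : Fin N} {t : ℝ}
    (ord : ∀ a b : Fin N, a < b → Function.update z i t b < Function.update z i t a) :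
    0 < vand (Function.update z i t) := by
  rw [vand_upd]; exact mul_pos (qfn_pos ord) (Cc_pos ord)

lemma integrand_hasDerivAt {N : ℕ} (β : ℝ) (V : ℝ → ℝ) (hV : ContDiff ℝ (⊤ : ℕ∞) V)
    (z : Fin N → ℝ) (i : Fin N) (t : ℝ)
    (ord : ∀ a b : Fin N, a < b → Function.update z i t b < Function.update z i t a) :
    HasDerivAt (fun s => integrand β V (Function.update z i s))
      ((deriv V t + 2 * β * Ssum z i t) * integrand β V (Function.update z i t)) t := by
  classical
  have hq := qfn_hasDerivAt z i t (ord_ne ord)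
  have hvand : HasDerivAt (fun s => vand (Function.update z i s))
      (qfn z i t * Ssum z i t * Cc z i) t := by
    have : (fun s => vand (Function.update z i s)) = fun s => qfn z i s * Cc z i := by
      funext s; exact vand_upd z i s
    rw [this]
    exact hq.mul_const _
  have hvpos := vand_upd_pos ord
  have hvne : vand (Function.update z i t) ≠ 0 := ne_of_gt hvpos
  have hrpow : HasDerivAt (fun s => vand (Function.update z i s) ^ (2 * β))
      (2 * β * Ssum z i t * vand (Function.update z i t) ^ (2 * β)) t := by
    have h1 := hvand.rpow_const (p := 2 * β) (Or.inl hvne)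
    have h2 : qfn z i t * Ssum z i t * Cc z i * (2 * β) *
        vand (Function.update z i t) ^ (2 * β - 1) =
        2 * β * Ssum z i t * vand (Function.update z i t) ^ (2 * β) := by
      have hqne : qfn z i t ≠ 0 := ne_of_gt (qfn_pos ord)
      have hCne : Cc z i ≠ 0 := ne_of_gt (Cc_pos ord)
      rw [Real.rpow_sub_one hvne, vand_upd]
      field_simp
    rwa [h2] at h1
  set D : ℝ := ∑ k ∈ Finset.univ.erase i, V (z k) with hD
  have hsum : ∀ s : ℝ, (∑ k : Fin N, V (Function.update z i s k)) = V s + D := by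
    intro s
    rw [← Finset.add_sum_erase _ _ (Finset.mem_univ i), Function.update_self]
    congr 1
    apply Finset.sum_congr rfl
    intro k hk
    rw [Function.update_of_ne (Finset.ne_of_mem_erase hk)]
  have hVd : HasDerivAt V (deriv V t) t :=
    ((hV.differentiable (by simp)) t).hasDerivAt
  have hexp : HasDerivAt (fun s => Real.exp (∑ k : Fin N, V (Function.update z i s k)))
      (Real.exp (∑ k : Fin N, V (Function.update z i t k)) * deriv V t) t := by
    have : (fun s => Real.exp (∑ k : Fin N, V (Function.update z i s k))) =
        fun s => Real.exp (V s + D) := by funext s; rw [hsum s]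
    rw [this, hsum t]
    exact (hVd.add_const D).exp
  have hmul := hrpow.fun_mul hexp
  have heq : (fun s => vand (Function.update z i s) ^ (2*β) *
      Real.exp (∑ k : Fin N, V (Function.update z i s k))) =
      (fun s => integrand β V (Function.update z i s)) := rfl
  rw [heq] at hmul
  refine hmul.congr_deriv ?_
  rw [integrand]
  ring

lemma ord_eventually {N : ℕ} {z : Fin N → ℝ} (i : Fin N)
    (hz : ∀ a b : Fin N, a < b → z b < z a) :
    ∀ᶠ t in nhds (z i), ∀ a b : Fin N, a < b →
      Function.update z i t b < Function.update z i t a := by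
  rw [Filter.eventually_all]
  intro a
  rw [Filter.eventually_all]
  intro b
  by_cases hab : a < b
  · have hca : Continuous (fun t : ℝ => Function.update z i t a) := by
      by_cases h : a = i
      · subst h; simp only [Function.update_self]; exact continuous_id
      · simp only [Function.update_of_ne h]; exact continuous_const
    have hcb : Continuous (fun t : ℝ => Function.update z i t b) := by
      by_cases h : b = i
      · subst h; simp only [Function.update_self]; exact continuous_id
      · simp only [Function.update_of_ne h]; exact continuous_const
    have hc : ContinuousAt (fun t : ℝ =>
        Function.update z i t a - Function.update z i t b) (z i) :=
      (hca.sub hcb).continuousAt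
    have hpos : (0:ℝ) < Function.update z i (z i) a - Function.update z i (z i) b := by
      simp only [Function.update_eq_self]
      exact sub_pos.mpr (hz a b hab)
    have hev := hc.eventually (isOpen_Ioi.eventually_mem hpos)
    filter_upwards [hev] with t ht _
    exact sub_pos.mp ht
  · exact Filter.Eventually.of_forall (fun t h => absurd h hab)

lemma Ssum_hasDerivAt {N : ℕ} (z : Fin N → ℝ) (i : Fin N) (t : ℝ)
    (h : ∀ j : Fin N, j ≠ i → t ≠ z j) :
    HasDerivAt (Ssum z i) (-Tsum z i t) t := by
  have := HasDerivAt.fun_sum (u := Finset.univ.filter (fun j => j ≠ i))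
    (A := fun j s => (s - z j)⁻¹) (A' := fun j => -((t - z j)⁻¹)^2)
    (fun j hj => by
      have hne : t - z j ≠ 0 := sub_ne_zero.mpr (h j (by simpa using hj))
      have := (((hasDerivAt_id t).sub_const (z j)).inv hne)
      refine this.congr_deriv ?_
      simp only [id]
      field_simp)
  refine this.congr_deriv ?_
  rw [Tsum, ← Finset.sum_neg_distrib]

lemma hasDerivAt_pow' {n : ℕ} (x : ℝ) :
    HasDerivAt (fun s : ℝ => s ^ (n + 2)) (((n:ℝ) + 2) * x ^ (n + 1)) x := by
  have := hasDerivAt_pow (n + 2) x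
  simp only [Nat.add_sub_cancel, Nat.cast_add, Nat.cast_ofNat] at this
  exact this

lemma lemA {N : ℕ} (β : ℝ) (n : ℕ) (V : ℝ → ℝ) (hV : ContDiff ℝ (⊤ : ℕ∞) V)
    (z : Fin N → ℝ) (hz : ∀ a b : Fin N, a < b → z b < z a) (i : Fin N) :
    pd i (pd i (fun w => w i ^ (n + 2) * integrand β V w)) z =
      (((n:ℝ)+2)*((n:ℝ)+1)*(z i)^n
        + 2*((n:ℝ)+2)*(z i)^(n+1)*(deriv V (z i) + 2*β*Ssum z i (z i))
        + (z i)^(n+2)*((deriv (deriv V) (z i) - 2*β*Tsum z i (z i))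
            + (deriv V (z i) + 2*β*Ssum z i (z i))^2)) * integrand β V z := by
  classical
  rw [pd_pd]
  have hfun : (fun t => (fun w => w i ^ (n + 2) * integrand β V w) (Function.update z i t)) =
      fun t => t ^ (n + 2) * integrand β V (Function.update z i t) := by
    funext t; simp only [Function.update_self]
  rw [hfun]
  set I : ℝ → ℝ := fun t => integrand β V (Function.update z i t) with hI
  set M : ℝ → ℝ := fun t => ((n:ℝ)+2)*t^(n+1) + t^(n+2)*(deriv V t + 2*β*Ssum z i t) with hM
  have ev1 : ∀ᶠ t in nhds (z i),
      HasDerivAt (fun s => s ^ (n + 2) * I s) (M t * I t) t := by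
    filter_upwards [ord_eventually i hz] with t ht
    have h1 := (hasDerivAt_pow' (n := n) t).fun_mul (integrand_hasDerivAt β V hV z i t ht)
    refine h1.congr_deriv ?_
    simp only [hM, hI]
    ring
  have ev2 : deriv (fun s => s ^ (n + 2) * I s) =ᶠ[nhds (z i)] fun t => M t * I t :=
    ev1.mono fun t h => h.deriv
  rw [ev2.deriv_eq]
  -- now compute deriv (M * I) at z i
  have ord0 : ∀ a b : Fin N, a < b →
      Function.update z i (z i) b < Function.update z i (z i) a := by
    simp only [Function.update_eq_self]
    exact hz
  have hzne : ∀ j : Fin N, j ≠ i → z i ≠ z j := ord_ne ord0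
  have hIz : HasDerivAt I ((deriv V (z i) + 2*β*Ssum z i (z i)) * I (z i)) (z i) :=
    integrand_hasDerivAt β V hV z i (z i) ord0
  have hV'd : HasDerivAt (deriv V) (deriv (deriv V) (z i)) (z i) := by
    have h1 : ContDiff ℝ (↑(⊤ : ℕ∞)) V := hV.of_le (by simp)
    exact ((((contDiff_infty_iff_deriv.mp h1).2).differentiable
      (by simp)) (z i)).hasDerivAt
  have hSd : HasDerivAt (Ssum z i) (-Tsum z i (z i)) (z i) :=
    Ssum_hasDerivAt z i (z i) hzne
  have hMd : HasDerivAt M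
      (((n:ℝ)+2)*(((n:ℝ)+1) * (z i)^n)
        + (((n:ℝ)+2)*(z i)^(n+1)*(deriv V (z i) + 2*β*Ssum z i (z i))
          + (z i)^(n+2)*(deriv (deriv V) (z i) + 2*β*(-Tsum z i (z i))))) (z i) := by
    have hp1 : HasDerivAt (fun t : ℝ => ((n:ℝ)+2)*t^(n+1))
        (((n:ℝ)+2)*(((n:ℝ)+1) * (z i)^n) ) (z i) := by
      have := hasDerivAt_pow (n+1) (z i)
      simp only [Nat.add_sub_cancel, Nat.cast_add, Nat.cast_one] at this
      exact this.const_mul _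
    have hp2 : HasDerivAt (fun t : ℝ => t^(n+2)*(deriv V t + 2*β*Ssum z i t))
        (((n:ℝ)+2)*(z i)^(n+1)*(deriv V (z i) + 2*β*Ssum z i (z i))
          + (z i)^(n+2)*(deriv (deriv V) (z i) + 2*β*(-Tsum z i (z i)))) (z i) := by
      exact (hasDerivAt_pow' (z i)).mul (hV'd.add (hSd.const_mul (2*β)))
    exact hp1.add hp2
  have htot := hMd.fun_mul hIz
  rw [htot.deriv]
  have hIzz : I (z i) = integrand β V z := by
    simp only [hI, Function.update_eq_self]
  rw [hIzz]
  simp only [hM]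
  ring

lemma lemB {N : ℕ} (β : ℝ) (n : ℕ) (V : ℝ → ℝ) (hV : ContDiff ℝ (⊤ : ℕ∞) V)
    (z : Fin N → ℝ) (hz : ∀ a b : Fin N, a < b → z b < z a) (i j : Fin N) (hji : j ≠ i) :
    pd i (fun w => w i ^ (n + 2) / (w i - w j) * integrand β V w) z =
      ((((n:ℝ)+2)*(z i)^(n+1)*(z i - z j) - (z i)^(n+2))/(z i - z j)^2
        + (z i)^(n+2)/(z i - z j)*(deriv V (z i) + 2*β*Ssum z i (z i)))
        * integrand β V z := by
  classical
  rw [pd]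
  have hfun : (fun t => (fun w => w i ^ (n + 2) / (w i - w j) * integrand β V w)
      (Function.update z i t)) =
      fun t => t ^ (n + 2) / (t - z j) * integrand β V (Function.update z i t) := by
    funext t
    simp only [Function.update_self, Function.update_of_ne hji]
  rw [hfun]
  have ord0 : ∀ a b : Fin N, a < b →
      Function.update z i (z i) b < Function.update z i (z i) a := by
    simp only [Function.update_eq_self]
    exact hz
  have hne : z i - z j ≠ 0 := sub_ne_zero.mpr (ord_ne ord0 j hji)
  have hIz := integrand_hasDerivAt β V hV z i (z i) ord0
  have hq : HasDerivAt (fun t : ℝ => t ^ (n + 2) / (t - z j))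
      ((((n:ℝ)+2)*(z i)^(n+1)*(z i - z j) - (z i)^(n+2) * 1)/(z i - z j)^2) (z i) :=
    (hasDerivAt_pow' (z i)).div ((hasDerivAt_id (z i)).sub_const (z j)) hne
  have htot := hq.fun_mul hIz
  rw [htot.deriv]
  simp only [Function.update_eq_self]
  ring

end Aux

section Final

noncomputable def aco {N : ℕ} (β : ℝ) (n : ℕ) (V : ℝ → ℝ) (z : Fin N → ℝ) (i : Fin N) : ℝ :=
  ((n:ℝ)+2)*((n:ℝ)+1)*(z i)^n
    + 2*((n:ℝ)+2)*(z i)^(n+1)*(deriv V (z i) + 2*β*Ssum z i (z i))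
    + (z i)^(n+2)*((deriv (deriv V) (z i) - 2*β*Tsum z i (z i))
        + (deriv V (z i) + 2*β*Ssum z i (z i))^2)

noncomputable def bco {N : ℕ} (β : ℝ) (n : ℕ) (V : ℝ → ℝ) (z : Fin N → ℝ) (i j : Fin N) : ℝ :=
  (((n:ℝ)+2)*(z i)^(n+1)*(z i - z j) - (z i)^(n+2))/(z i - z j)^2
    + (z i)^(n+2)/(z i - z j)*(deriv V (z i) + 2*β*Ssum z i (z i))

lemma zsub_ne {N : ℕ} (z : Fin N → ℝ) (hz : ∀ a b : Fin N, a < b → z b < z a)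
    (i j : Fin N) (hj : j ≠ i) : z i - z j ≠ 0 := by
  have ord0 : ∀ a b : Fin N, a < b →
      Function.update z i (z i) b < Function.update z i (z i) a := by
    simp only [Function.update_eq_self]; exact hz
  exact sub_ne_zero.mpr (ord_ne ord0 j hj)

lemma bsum {N : ℕ} (n : ℕ) (c : ℝ) (z : Fin N → ℝ)
    (hz : ∀ a b : Fin N, a < b → z b < z a) (i : Fin N) :
    ∑ j ∈ Finset.univ.filter (fun j => j ≠ i),
      ((((n:ℝ)+2)*(z i)^(n+1)*(z i - z j) - (z i)^(n+2))/(z i - z j)^2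
        + (z i)^(n+2)/(z i - z j)*c) =
      ((n:ℝ)+2)*(z i)^(n+1)*Ssum z i (z i) - (z i)^(n+2)*Tsum z i (z i)
        + (z i)^(n+2)*c*Ssum z i (z i) := by
  rw [Ssum, Tsum, Finset.mul_sum, Finset.mul_sum, Finset.mul_sum,
    ← Finset.sum_sub_distrib, ← Finset.sum_add_distrib]
  apply Finset.sum_congr rfl
  intro j hj
  simp only [Finset.mem_filter] at hj
  have hne := zsub_ne z hz i j hj.2
  field_simp

lemma rsum {N : ℕ} (n : ℕ) (V : ℝ → ℝ) (z : Fin N → ℝ) (i : Fin N) :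
    ∑ j ∈ Finset.univ.filter (fun j => j ≠ i),
      ((z i)^(n+2) * deriv V (z i) + ((n:ℝ)+2)*(z i)^(n+1))/(z i - z j) =
      ((z i)^(n+2) * deriv V (z i) + ((n:ℝ)+2)*(z i)^(n+1)) * Ssum z i (z i) := by
  rw [Ssum, Finset.mul_sum]
  apply Finset.sum_congr rfl
  intro j _
  rw [div_eq_mul_inv]

end Final

/-- the Ward-identity integrand formula for the β-deformed second-order
operator `𝒲²_n = ∑_i ∂²/∂z_i² ∘ z_i^{n+2} - 2β ∑_{i≠j} ∂/∂z_i ∘ (z_i^{n+2}/(z_i-z_j))`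
applied to `Δ^{2β} e^V`, on the domain `z_1 > ... > z_N`. -/
theorem beta_ward_integrand {N : ℕ} (β : ℝ) (n : ℕ) (V : ℝ → ℝ)
    (hV : ContDiff ℝ (⊤ : ℕ∞) V) (z : Fin N → ℝ)
    (hz : ∀ i j : Fin N, i < j → z j < z i) :
    ∑ i : Fin N, pd i (pd i (fun w => w i ^ (n + 2) * integrand β V w)) z -
        2 * β * ∑ i : Fin N, ∑ j ∈ Finset.univ.filter (fun j => j ≠ i),
          pd i (fun w => w i ^ (n + 2) / (w i - w j) * integrand β V w) z =
      ((∑ i : Fin N,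
            (z i ^ (n + 2) * (deriv V (z i)) ^ 2 +
              z i ^ (n + 2) * deriv (deriv V) (z i) +
              2 * ((n : ℝ) + 2) * z i ^ (n + 1) * deriv V (z i) +
              ((n : ℝ) + 2) * ((n : ℝ) + 1) * z i ^ n)) +
          2 * β * ∑ i : Fin N, ∑ j ∈ Finset.univ.filter (fun j => j ≠ i),
            (z i ^ (n + 2) * deriv V (z i) + ((n : ℝ) + 2) * z i ^ (n + 1)) /
              (z i - z j)) *
        integrand β V z := by
  classical
  have h1 : ∀ i ∈ (Finset.univ : Finset (Fin N)),
      pd i (pd i (fun w => w i ^ (n + 2) * integrand β V w)) z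
      = aco β n V z i * integrand β V z := fun i _ => lemA β n V hV z hz i
  rw [Finset.sum_congr rfl h1]
  have h2 : ∀ i ∈ (Finset.univ : Finset (Fin N)),
      (∑ j ∈ Finset.univ.filter (fun j => j ≠ i),
        pd i (fun w => w i ^ (n + 2) / (w i - w j) * integrand β V w) z)
      = (((n:ℝ)+2)*(z i)^(n+1)*Ssum z i (z i) - (z i)^(n+2)*Tsum z i (z i)
        + (z i)^(n+2)*(deriv V (z i) + 2*β*Ssum z i (z i))*Ssum z i (z i))
        * integrand β V z := by
    intro i _
    have hb : ∀ j ∈ Finset.univ.filter (fun j => j ≠ i),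
        pd i (fun w => w i ^ (n + 2) / (w i - w j) * integrand β V w) z =
        ((((n:ℝ)+2)*(z i)^(n+1)*(z i - z j) - (z i)^(n+2))/(z i - z j)^2
          + (z i)^(n+2)/(z i - z j)*(deriv V (z i) + 2*β*Ssum z i (z i)))
          * integrand β V z := by
      intro j hj
      simp only [Finset.mem_filter] at hj
      exact lemB β n V hV z hz i j hj.2
    rw [Finset.sum_congr rfl hb, ← Finset.sum_mul,
      bsum n (deriv V (z i) + 2*β*Ssum z i (z i)) z hz i]
  rw [Finset.sum_congr rfl h2]
  have h3 : ∀ i ∈ (Finset.univ : Finset (Fin N)),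
      (∑ j ∈ Finset.univ.filter (fun j => j ≠ i),
        (z i ^ (n + 2) * deriv V (z i) + ((n : ℝ) + 2) * z i ^ (n + 1)) / (z i - z j))
      = (z i ^ (n + 2) * deriv V (z i) + ((n:ℝ)+2) * z i ^ (n + 1)) * Ssum z i (z i) :=
    fun i _ => rsum n V z i
  rw [Finset.sum_congr rfl h3]
  rw [← Finset.sum_mul, ← Finset.sum_mul]
  have hco : (∑ i : Fin N, aco β n V z i)
      - 2*β*(∑ i : Fin N, (((n:ℝ)+2)*(z i)^(n+1)*Ssum z i (z i)
          - (z i)^(n+2)*Tsum z i (z i)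
          + (z i)^(n+2)*(deriv V (z i) + 2*β*Ssum z i (z i))*Ssum z i (z i)))
      = (∑ i : Fin N,
            (z i ^ (n + 2) * (deriv V (z i)) ^ 2 +
              z i ^ (n + 2) * deriv (deriv V) (z i) +
              2 * ((n : ℝ) + 2) * z i ^ (n + 1) * deriv V (z i) +
              ((n : ℝ) + 2) * ((n : ℝ) + 1) * z i ^ n))
        + 2*β*(∑ i : Fin N,
            (z i ^ (n + 2) * deriv V (z i) + ((n:ℝ)+2) * z i ^ (n + 1)) * Ssum z i (z i)) := by
    rw [Finset.mul_sum, Finset.mul_sum, ← Finset.sum_sub_distrib, ← Finset.sum_add_distrib]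
    apply Finset.sum_congr rfl
    intro i _
    rw [aco]
    ring
  linear_combination integrand β V z * hco
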